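/- Let q ∈ [0,1] and suppose P is Simes-detectable at qα, i.e., π̄_{qα} < 1. Then there exists a sequence (J_m)_{m≥1}, where each J_m is a random subset of {1,…,m} measurable with respect to p_1,…,p_m, and a constant y > 0, such that almost surely q_{α,m}(J_m) ≤ π̄_α·q for every m, and ℙ(|J_m|/m ≥ y) → 1 as m → ∞. -/

import Mathlib

open Finset

attribute [local instance] Classical.propDecidable

/-- The `i`-th smallest (1-indexed) element of the multiset of p-values `{p_j : j ∈ I}`. -/
noncomputable def pOrd {m : ℕ} (p : Fin m → ℝ) (I : Finset (Fin m)) (i : ℕ) : ℝ :=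
  ((I.val.map p).sort (· ≤ ·)).getD (i - 1) 0

/-- The Simes local test rejects `H_I` (written `I ∈ 𝒰`) iff `I` is nonempty and
`|I|·p_{(i:I)} ≤ i·α` for at least one `1 ≤ i ≤ |I|`. -/
def SimesU {m : ℕ} (α : ℝ) (p : Fin m → ℝ) (I : Finset (Fin m)) : Prop :=
  ∃ i, 1 ≤ i ∧ i ≤ I.card ∧ (I.card : ℝ) * pOrd p I i ≤ (i : ℝ) * α

/-- Closed testing rejects `H_I` (written `I ∈ 𝒳`) iff `J ∈ 𝒰` for every `J ⊇ I`. -/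
def ClosedX {m : ℕ} (α : ℝ) (p : Fin m → ℝ) (I : Finset (Fin m)) : Prop :=
  ∀ J, I ⊆ J → SimesU α p J

/-- `K_i = {r_{m−i+1},…,r_m}`: the `i` indices with largest p-values. -/
def Kset {m : ℕ} (r : Fin m → Fin m) (i : ℕ) : Finset (Fin m) :=
  (Finset.univ.filter fun j : Fin m => m - i ≤ (j : ℕ)).image r

/-- `L_i = {r_1,…,r_i}`: the `i` indices with smallest p-values. -/
def Lset {m : ℕ} (r : Fin m → Fin m) (i : ℕ) : Finset (Fin m) :=
  (Finset.univ.filter fun j : Fin m => (j : ℕ) < i).image r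

/-- `h = max{0 ≤ i ≤ m : K_i ∉ 𝒰}`. -/
noncomputable def hval {m : ℕ} (α : ℝ) (p : Fin m → ℝ) (r : Fin m → Fin m) : ℕ :=
  sSup {i | i ≤ m ∧ ¬ SimesU α p (Kset r i)}

/-- `t(S) = max{|I| : I ⊆ S, I ∉ 𝒳}`. -/
noncomputable def tval {m : ℕ} (α : ℝ) (p : Fin m → ℝ) (S : Finset (Fin m)) : ℕ :=
  sSup {k | ∃ I, I ⊆ S ∧ ¬ ClosedX α p I ∧ I.card = k}

/-- `d(S) = |S| − t(S)`. -/
noncomputable def dval {m : ℕ} (α : ℝ) (p : Fin m → ℝ) (S : Finset (Fin m)) : ℕ :=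
  S.card - tval α p S

/-- `q_α(S) = t(S)/|S|` for nonempty `S`, and `0` for `S = ∅`. -/
noncomputable def qval {m : ℕ} (α : ℝ) (p : Fin m → ℝ) (S : Finset (Fin m)) : ℝ :=
  if S = ∅ then 0 else (tval α p S : ℝ) / S.card

/-- `z = 0` if `h = m`, else `z = min{m−h ≤ i ≤ m : h·p_{(i)} ≤ (i−m+h+1)·α}`. -/
noncomputable def zval {m : ℕ} (α : ℝ) (p : Fin m → ℝ) (r : Fin m → Fin m) : ℕ :=
  if hval α p r = m then 0 else
    sInf {i | m - hval α p r ≤ i ∧ i ≤ m ∧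
      (hval α p r : ℝ) * pOrd p Finset.univ i ≤ ((i : ℝ) - m + hval α p r + 1) * α}

/-- `b_q = max{1 ≤ i ≤ m : m·p_{(i)} ≤ i·q}` (with `b_q = 0` if no such `i`). -/
noncomputable def bval {m : ℕ} (q : ℝ) (p : Fin m → ℝ) : ℕ :=
  sSup {i | 1 ≤ i ∧ i ≤ m ∧ (m : ℝ) * pOrd p Finset.univ i ≤ (i : ℝ) * q}

/-- `π̄_α = inf_{0 ≤ x < 1} (1 − P(xα))/(1 − x)` if `P(α) < 1`, and `π̄_α = 0` otherwise. -/
noncomputable def piBar (P : ℝ → ℝ) (α : ℝ) : ℝ :=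
  if P α < 1 then sInf ((fun x => (1 - P (x * α)) / (1 - x)) '' Set.Ico 0 1) else 0

open MeasureTheory ProbabilityTheory Filter

/-!
Detectability at `q α` gives `x₀ < 1` with `x₀ < P(x₀ q α)`. Put `c = x₀ q` and
`S = {i : p_i ≤ c α}`, so that `|S| / m → P(c α) > x₀` almost surely. A set `I ⊆ S` not
rejected by closed testing lies in some `K` not rejected by Simes. The Simes inequality at
`|I| ≤ |K ∩ S|` gives `|I| ≤ c |K|`, and at `|K ∩ {p ≤ x α}| ≥ N_x + |K| - m`, with
`N_x = |{i : p_i ≤ x α}|`, it gives `|K| (1 - x) ≤ m - N_x`; hence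
`t(S) (1 - x) ≤ c (m - N_x)`. By the strong law `N_x / m → P(x α)`, so asymptotically
`q(S) ≤ (x₀ / P(c α)) q (1 - P(x α)) / (1 - x)`, which is below `π̄_α q` once `x` nearly
attains the infimum defining `π̄_α`. Keeping `S` only when the two frequencies are already
close to their limits makes the bound hold surely. If `P(α) = 1`, all p-values are almost
surely at most `α`, so closed testing rejects everything and `J_m = {1,…,m}` works.
-/

theorem List.Pairwise.getElem_le_of_lt_countP {α : Type*} [LinearOrder α] {l : List α}
    (hl : l.Pairwise (· ≤ ·)) {t : α} {i : ℕ} (hi : i < l.length)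
    (h : i < l.countP (· ≤ t)) : l[i] ≤ t := by
  induction l generalizing i with
  | nil => simp at hi
  | cons a l ih =>
    rw [List.pairwise_cons] at hl
    cases i with
    | zero =>
      obtain ⟨b, hb, hbt⟩ := List.countP_pos_iff.1 (Nat.zero_lt_of_lt h)
      rcases List.mem_cons.1 hb with rfl | hb
      · simpa using hbt
      · exact (hl.1 b hb).trans (by simpa using hbt)
    | succ j =>
      refine ih hl.2 _ ?_
      rw [List.countP_cons] at h
      split at h <;> omega

theorem pOrd_le_of_le_card_filter {m : ℕ} (v : Fin m → ℝ) (K : Finset (Fin m)) {t : ℝ}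
    {i : ℕ} (hi : 1 ≤ i) (h : i ≤ #(K.filter (v · ≤ t))) : pOrd v K i ≤ t := by
  have hsort := Multiset.pairwise_sort (K.val.map v) (· ≤ ·)
  set l := (K.val.map v).sort (· ≤ ·)
  have hcount : #(K.filter (v · ≤ t)) = l.countP (· ≤ t) := by
    rw [← Multiset.coe_countP, Multiset.sort_eq, Multiset.countP_map, card_def]
    rfl
  have hlen : i - 1 < l.length := by
    have := (card_filter_le K _).trans' h
    rw [Multiset.length_sort, Multiset.card_map, card_val]
    omega
  rw [pOrd, List.getD_eq_getElem _ _ hlen]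
  exact hsort.getElem_le_of_lt_countP hlen (by omega)

theorem exists_card_eq_tval {m : ℕ} (α : ℝ) (v : Fin m → ℝ) (S : Finset (Fin m)) :
    ∃ I ⊆ S, ¬ ClosedX α v I ∧ #I = tval α v S := by
  have hempty : ¬ ClosedX α v ∅ := fun h => by
    obtain ⟨i, hi, hi', -⟩ := h ∅ subset_rfl
    rw [card_empty] at hi'
    omega
  refine Nat.sSup_mem (s := {k | ∃ I, I ⊆ S ∧ ¬ ClosedX α v I ∧ #I = k})
    ⟨0, ∅, empty_subset _, hempty, card_empty⟩ ⟨m, ?_⟩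
  rintro _ ⟨I, -, -, rfl⟩
  simpa using card_le_univ I

section NotSimes

variable {m : ℕ} {α : ℝ} {v : Fin m → ℝ} {K : Finset (Fin m)}

theorem lt_card_mul_of_not_simesU (hK : ¬ SimesU α v K) (hα : 0 < α) {s : ℝ} {i : ℕ}
    (hi : 1 ≤ i) (h : i ≤ #(K.filter (v · ≤ s * α))) : (i : ℝ) < #K * s := by
  have hiK : i ≤ #K := h.trans (card_filter_le _ _)
  have hlt : (i : ℝ) * α < #K * pOrd v K i := not_le.1 fun h' => hK ⟨i, hi, hiK, h'⟩
  have hle : (#K : ℝ) * pOrd v K i ≤ #K * s * α := by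
    rw [mul_assoc]
    gcongr
    exact pOrd_le_of_le_card_filter v K hi h
  exact lt_of_mul_lt_mul_right (hlt.trans_le hle) hα.le

theorem natCast_le_card_mul_of_not_simesU (hK : ¬ SimesU α v K) (hα : 0 < α) {s : ℝ} {i : ℕ}
    (hs : 0 ≤ s) (h : i ≤ #(K.filter (v · ≤ s * α))) : (i : ℝ) ≤ #K * s := by
  rcases Nat.eq_zero_or_pos i with rfl | hi
  · simpa using mul_nonneg (Nat.cast_nonneg #K) hs
  · exact (lt_card_mul_of_not_simesU hK hα hi h).le

/-- By inclusion–exclusion `K` contains at least `N + |K| - m` of the `N` p-values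
below `x α`. -/
theorem card_mul_one_sub_le_of_not_simesU (hK : ¬ SimesU α v K) (hα : 0 < α) {x : ℝ}
    (hx : 0 ≤ x) : (#K : ℝ) * (1 - x) ≤ m - #(univ.filter (v · ≤ x * α)) := by
  set T := univ.filter (v · ≤ x * α)
  have hTK : #T + #K - m ≤ #(K.filter (v · ≤ x * α)) := by
    have hinter : K.filter (v · ≤ x * α) = T ∩ K := by ext; simp [T, and_comm]
    have := card_inter_add_card_union T K
    have := card_le_univ (T ∪ K)
    rw [Fintype.card_fin] at this
    rw [hinter]
    omega
  have h := natCast_le_card_mul_of_not_simesU hK hα hx hTK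
  have hcast : ((#T + #K : ℕ) : ℝ) ≤ ((#T + #K - m : ℕ) : ℝ) + m := by
    exact_mod_cast le_tsub_add
  push_cast at hcast
  linarith

end NotSimes

theorem tval_mul_one_sub_le {m : ℕ} {α c x : ℝ} (v : Fin m → ℝ) (hα : 0 < α) (hc : 0 ≤ c)
    (hx₀ : 0 ≤ x) (hx₁ : x ≤ 1) :
    (tval α v (univ.filter (v · ≤ c * α)) : ℝ) * (1 - x)
      ≤ c * (m - #(univ.filter (v · ≤ x * α))) := by
  obtain ⟨I, hIS, hI, hcard⟩ := exists_card_eq_tval α v (univ.filter (v · ≤ c * α))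
  obtain ⟨K, hIK, hK⟩ : ∃ K, I ⊆ K ∧ ¬ SimesU α v K := by simpa [ClosedX] using hI
  have hIK' : #I ≤ #(K.filter (v · ≤ c * α)) :=
    card_le_card fun j hj => mem_filter.2 ⟨hIK hj, (mem_filter.1 (hIS hj)).2⟩
  have h₁ := natCast_le_card_mul_of_not_simesU hK hα hc (hcard ▸ hIK')
  have h₂ := card_mul_one_sub_le_of_not_simesU hK hα hx₀
  calc (tval α v (univ.filter (v · ≤ c * α)) : ℝ) * (1 - x) ≤ #K * c * (1 - x) := by
        gcongr
    _ = c * (#K * (1 - x)) := by ring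
    _ ≤ c * (m - #(univ.filter (v · ≤ x * α))) := by gcongr

theorem tval_eq_zero_of_forall_le {m : ℕ} {α : ℝ} {v : Fin m → ℝ} (hα : 0 < α)
    (hv : ∀ i, v i ≤ α) (S : Finset (Fin m)) : tval α v S = 0 := by
  obtain ⟨I, -, hI, hcard⟩ := exists_card_eq_tval α v S
  obtain ⟨K, hIK, hK⟩ : ∃ K, I ⊆ K ∧ ¬ SimesU α v K := by simpa [ClosedX] using hI
  by_contra hne
  have hKpos : 1 ≤ #K := (card_le_card hIK).trans' (by omega)
  have := lt_card_mul_of_not_simesU hK hα hKpos (s := 1)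
    (by rw [filter_true_of_mem fun j _ => by simpa using hv j])
  simp at this

theorem qval_filter_le {m : ℕ} {α c x θ₁ θ₂ b : ℝ} {v : Fin m → ℝ} (hα : 0 < α) (hc : 0 ≤ c)
    (hx₀ : 0 ≤ x) (hx₁ : x < 1) (hb : 0 ≤ b) (hkey : c * (1 - θ₁) ≤ b * θ₂ * (1 - x))
    (h₁ : θ₁ * m ≤ #(univ.filter (v · ≤ x * α)))
    (h₂ : θ₂ * m ≤ #(univ.filter (v · ≤ c * α))) :
    qval α v (univ.filter (v · ≤ c * α)) ≤ b := by
  set S := univ.filter (v · ≤ c * α)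
  rw [qval]
  split_ifs with hS
  · exact hb
  have hSpos : (0 : ℝ) < #S := by exact_mod_cast card_pos.2 (nonempty_iff_ne_empty.2 hS)
  rw [div_le_iff₀ hSpos]
  refine le_of_mul_le_mul_right ?_ (sub_pos.2 hx₁)
  calc (tval α v S : ℝ) * (1 - x) ≤ c * (m - #(univ.filter (v · ≤ x * α))) :=
        tval_mul_one_sub_le v hα hc hx₀ hx₁.le
    _ ≤ c * (1 - θ₁) * m := by nlinarith
    _ ≤ b * θ₂ * (1 - x) * m := by gcongr
    _ = b * (1 - x) * (θ₂ * m) := by ring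
    _ ≤ b * (1 - x) * #S := by gcongr
    _ = b * #S * (1 - x) := by ring

section PiBar

variable {P : ℝ → ℝ} {α : ℝ}

theorem exists_one_sub_lt_of_piBar_lt (hP : P α < 1) {r : ℝ} (h : piBar P α < r) :
    ∃ x ∈ Set.Ico (0 : ℝ) 1, 1 - P (x * α) < r * (1 - x) := by
  rw [piBar, if_pos hP] at h
  obtain ⟨_, ⟨x, hx, rfl⟩, hlt⟩ :=
    exists_lt_of_csInf_lt (Set.image_nonempty.2 ⟨0, by simp⟩) h
  exact ⟨x, hx, (div_lt_iff₀ (sub_pos.2 hx.2)).1 hlt⟩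

theorem piBar_pos (hα₀ : 0 < α) (hα₁ : α ≤ 1) (hmono : MonotoneOn P (Set.Icc 0 1))
    (hP : P α < 1) : 0 < piBar P α := by
  rw [piBar, if_pos hP]
  refine (sub_pos.2 hP).trans_le (le_csInf (Set.image_nonempty.2 ⟨0, by simp⟩) ?_)
  rintro _ ⟨x, ⟨hx₀, hx₁⟩, rfl⟩
  have hPx : P (x * α) ≤ P α :=
    hmono ⟨by positivity, by nlinarith⟩ ⟨hα₀.le, hα₁⟩ (by nlinarith)
  rw [le_div_iff₀ (sub_pos.2 hx₁)]
  nlinarith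

/-- `c = x₀ q` with `x₀` from detectability at `q α`, `θ₂ ∈ (x₀, P(c α))`, and `x` chosen
with `(1 - P(x α)) / (1 - x)` close enough to `π̄_α` that a threshold `θ₁ < P(x α)` fits. -/
theorem exists_thresholds (hα₀ : 0 < α) (hα₁ : α ≤ 1) (hmono : MonotoneOn P (Set.Icc 0 1))
    (hP : P α < 1) {q : ℝ} (hq₀ : 0 ≤ q) (hq₁ : q ≤ 1) (hdetect : piBar P (q * α) < 1) :
    ∃ c x θ₁ θ₂ : ℝ, 0 ≤ c ∧ c ≤ 1 ∧ 0 ≤ x ∧ x < 1 ∧ 0 < θ₂ ∧ θ₁ < P (x * α) ∧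
      θ₂ < P (c * α) ∧ c * (1 - θ₁) ≤ piBar P α * q * θ₂ * (1 - x) := by
  have hPq : P (q * α) < 1 :=
    (hmono ⟨by positivity, by nlinarith⟩ ⟨hα₀.le, hα₁⟩ (by nlinarith)).trans_lt hP
  obtain ⟨x₀, ⟨hx₀, hx₀₁⟩, h₀⟩ := exists_one_sub_lt_of_piBar_lt hPq hdetect
  have hx₀P : x₀ < P (x₀ * q * α) := by rw [mul_assoc]; linarith
  set π := piBar P α
  have hπ : 0 < π := piBar_pos hα₀ hα₁ hmono hP
  obtain ⟨θ₂, hθ₂, hθ₂P⟩ := exists_between hx₀P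
  obtain ⟨x, ⟨hx, hx₁⟩, h₁⟩ :=
    exists_one_sub_lt_of_piBar_lt hP (r := π + (θ₂ - x₀) * π) (by nlinarith)
  have hr : x₀ * (π + (θ₂ - x₀) * π) < π * θ₂ := by
    nlinarith [mul_pos (mul_pos hπ (sub_pos.2 hθ₂)) (sub_pos.2 hx₀₁)]
  have hgap : x₀ * (1 - P (x * α)) < π * θ₂ * (1 - x) :=
    calc x₀ * (1 - P (x * α)) ≤ x₀ * ((π + (θ₂ - x₀) * π) * (1 - x)) :=
          mul_le_mul_of_nonneg_left h₁.le hx₀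
      _ = x₀ * (π + (θ₂ - x₀) * π) * (1 - x) := by ring
      _ < π * θ₂ * (1 - x) := mul_lt_mul_of_pos_right hr (sub_pos.2 hx₁)
  refine ⟨x₀ * q, x, P (x * α) - (π * θ₂ * (1 - x) - x₀ * (1 - P (x * α))), θ₂,
    by positivity, by nlinarith, hx, hx₁, by linarith, by linarith, hθ₂P, ?_⟩
  nlinarith [mul_le_mul_of_nonneg_left hgap.le (mul_nonneg hq₀ (sub_nonneg.2 hx₀₁.le))]

end PiBar

theorem measurable_filter_le (m : ℕ) (t : ℝ) :
    Measurable[_, ⊤] fun v : Fin m → ℝ => univ.filter (v · ≤ t) := by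
  have hprop : Measurable fun v : Fin m → ℝ => fun i => v i ≤ t :=
    measurable_pi_lambda _ fun i =>
      measurableSet_setOfPred.1 (measurableSet_le (measurable_pi_apply i) measurable_const)
  let _ : MeasurableSpace (Finset (Fin m)) := ⊤
  convert (measurable_of_finite fun s : Fin m → Prop => univ.filter s).comp hprop using 2
  simp

noncomputable def guardedFilter (s t θ₁ θ₂ : ℝ) {m : ℕ} (v : Fin m → ℝ) : Finset (Fin m) :=
  if θ₁ * m ≤ #(univ.filter (v · ≤ s)) ∧ θ₂ * m ≤ #(univ.filter (v · ≤ t)) then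
    univ.filter (v · ≤ t)
  else ∅

theorem measurable_guardedFilter (m : ℕ) (s t θ₁ θ₂ : ℝ) :
    Measurable[_, ⊤] (guardedFilter s t θ₁ θ₂ : (Fin m → ℝ) → Finset (Fin m)) :=
  Measurable.ite
    ((measurable_filter_le m s (MeasurableSpace.measurableSet_top (s := {b | θ₁ * m ≤ #b}))).inter
      (measurable_filter_le m t (MeasurableSpace.measurableSet_top (s := {b | θ₂ * m ≤ #b}))))
    (measurable_filter_le m t) measurable_const

section Probability

variable {Ω : Type*} [MeasurableSpace Ω] {μ : Measure Ω} [IsProbabilityMeasure μ]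

theorem tendsto_measure_of_ae_eventually_mem {s : ℕ → Set Ω}
    (h : ∀ᵐ ω ∂μ, ∀ᶠ n in atTop, ω ∈ s n) : Tendsto (fun n => μ (s n)) atTop (nhds 1) := by
  set B : ℕ → Set Ω := fun N => {ω | ∀ n ≥ N, ω ∈ s n}
  have hB : Monotone B := fun N N' hN ω hω n hn => hω n (hN.trans hn)
  have hUnion : μ (⋃ N, B N) = 1 := by
    have : (⋃ N, B N) = {ω | ∀ᶠ n in atTop, ω ∈ s n} := by ext; simp [B, eventually_atTop]
    rw [this, measure_congr (ae_eq_univ (s := {ω | ∀ᶠ n in atTop, ω ∈ s n}) |>.2 (ae_iff.1 h)),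
      measure_univ]
  refine tendsto_of_tendsto_of_tendsto_of_le_of_le ?_ tendsto_const_nhds
    (fun N => measure_mono fun ω (hω : ω ∈ B N) => hω N le_rfl) fun _ => prob_le_one
  exact hUnion ▸ tendsto_measure_iUnion_atTop hB

theorem identDistrib_of_measure_le_eq {X Y : Ω → ℝ} (hX : Measurable X) (hY : Measurable Y)
    (hXr : ∀ ω, X ω ∈ Set.Icc (0 : ℝ) 1) (hYr : ∀ ω, Y ω ∈ Set.Icc (0 : ℝ) 1)
    (h : ∀ x ∈ Set.Icc (0 : ℝ) 1, μ {ω | X ω ≤ x} = μ {ω | Y ω ≤ x}) :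
    IdentDistrib X Y μ μ := by
  refine ⟨hX.aemeasurable, hY.aemeasurable, Measure.ext_of_Iic _ _ fun a => ?_⟩
  rw [Measure.map_apply hX measurableSet_Iic, Measure.map_apply hY measurableSet_Iic]
  rcases lt_or_ge a 0 with ha | ha₀
  · have hempty : ∀ Z : Ω → ℝ, (∀ ω, Z ω ∈ Set.Icc (0 : ℝ) 1) → Z ⁻¹' Set.Iic a = ∅ :=
      fun Z hZ => Set.eq_empty_of_forall_notMem fun ω hω => by
        rw [Set.mem_preimage, Set.mem_Iic] at hω
        linarith [(hZ ω).1]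
    rw [hempty X hXr, hempty Y hYr]
  rcases le_or_gt a 1 with ha₁ | ha
  · exact h a ⟨ha₀, ha₁⟩
  · have huniv : ∀ Z : Ω → ℝ, (∀ ω, Z ω ∈ Set.Icc (0 : ℝ) 1) → Z ⁻¹' Set.Iic a = Set.univ :=
      fun Z hZ => Set.eq_univ_of_forall fun ω => by
        rw [Set.mem_preimage, Set.mem_Iic]
        linarith [(hZ ω).2]
    rw [huniv X hXr, huniv Y hYr]

theorem ae_tendsto_card_filter_le_div {X : ℕ → Ω → ℝ} (hX : ∀ i, Measurable (X i))
    (hindep : iIndepFun X μ) (hident : ∀ i, IdentDistrib (X i) (X 0) μ μ) (t : ℝ) :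
    ∀ᵐ ω ∂μ, Tendsto (fun m : ℕ => (#(univ.filter fun i : Fin m => X i ω ≤ t) : ℝ) / m)
      atTop (nhds (μ.real {ω | X 0 ω ≤ t})) := by
  set f : ℝ → ℝ := (Set.Iic t).indicator 1
  have hf : Measurable f := measurable_one.indicator measurableSet_Iic
  have hf0 : f ∘ X 0 = (X 0 ⁻¹' Set.Iic t).indicator 1 :=
    funext fun ω => (Set.indicator_comp_right (X 0)).symm
  have hint : Integrable (f ∘ X 0) μ := by
    rw [hf0]
    exact (integrable_const 1).indicator (hX 0 measurableSet_Iic)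
  have hmean : μ[f ∘ X 0] = μ.real {ω | X 0 ω ≤ t} := by
    rw [hf0, integral_indicator_one (hX 0 measurableSet_Iic)]
    rfl
  have hsum : ∀ ω m, ∑ i ∈ range m, (f ∘ X i) ω
      = #(univ.filter fun i : Fin m => X i ω ≤ t) := by
    intro ω m
    rw [natCast_card_filter, ← Fin.sum_univ_eq_sum_range (fun i => (f ∘ X i) ω)]
    simp [f, Set.indicator_apply]
  filter_upwards [strong_law_ae (fun i => f ∘ X i) hint
    (fun i j hij => (hindep.indepFun hij).comp hf hf) fun i => (hident i).comp hf] with ω hω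
  rw [← hmean]
  refine hω.congr fun m => ?_
  rw [hsum, smul_eq_mul, inv_mul_eq_div]

theorem ae_eventually_mul_le_card_filter {X : ℕ → Ω → ℝ} (hX : ∀ i, Measurable (X i))
    (hXr : ∀ i ω, X i ω ∈ Set.Icc (0 : ℝ) 1) (hindep : iIndepFun X μ) {F : ℝ → ℝ}
    (hF : ∀ i, ∀ x ∈ Set.Icc (0 : ℝ) 1, μ {ω | X i ω ≤ x} = ENNReal.ofReal (F x))
    {t θ : ℝ} (ht : t ∈ Set.Icc (0 : ℝ) 1) (hθ : θ < F t) :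
    ∀ᵐ ω ∂μ, ∀ᶠ m : ℕ in atTop, θ * m ≤ #(univ.filter fun i : Fin m => X i ω ≤ t) := by
  have hident : ∀ i, IdentDistrib (X i) (X 0) μ μ := fun i =>
    identDistrib_of_measure_le_eq (hX i) (hX 0) (hXr i) (hXr 0) fun x hx =>
      (hF i x hx).trans (hF 0 x hx).symm
  have hθ' : θ < μ.real {ω | X 0 ω ≤ t} := by
    rw [measureReal_def, hF 0 t ht, ENNReal.toReal_ofReal']
    exact hθ.trans_le (le_max_left _ _)
  filter_upwards [ae_tendsto_card_filter_le_div hX hindep hident t] with ω hω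
  filter_upwards [hω.eventually (eventually_gt_nhds hθ'), eventually_gt_atTop 0] with m hm hm₀
  exact ((lt_div_iff₀ (Nat.cast_pos.2 hm₀)).1 hm).le

end Probability

def IsControlledSelection {Ω : Type*} [MeasureSpace Ω] (p : ℕ → Ω → ℝ) (α b y : ℝ)
    (J : (m : ℕ) → Ω → Finset (Fin m)) : Prop :=
  0 < y ∧
    (∀ m : ℕ, @Measurable Ω (Finset (Fin m))
      (MeasurableSpace.comap (fun ω => fun i : Fin m => p i.val ω) inferInstance) ⊤ (J m)) ∧
    (∀ᵐ ω ∂ℙ, ∀ m : ℕ, qval α (fun i : Fin m => p i.val ω) (J m ω) ≤ b) ∧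
    Tendsto (fun m : ℕ => ℙ {ω | y ≤ ((J m ω).card : ℝ) / m}) atTop (nhds 1)

section Selection

variable {Ω : Type*} [MeasureSpace Ω] [IsProbabilityMeasure (ℙ : Measure Ω)]
  {p : ℕ → Ω → ℝ} {α : ℝ}

theorem isControlledSelection_univ (hα : 0 < α) (hp : ∀ᵐ ω ∂ℙ, ∀ i, p i ω ≤ α) :
    IsControlledSelection p α 0 1 fun _ _ => univ := by
  refine ⟨one_pos, fun m => measurable_const, hp.mono fun ω hω m => ?_,
    tendsto_measure_of_ae_eventually_mem (.of_forall fun ω => ?_)⟩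
  · simp [qval, tval_eq_zero_of_forall_le hα fun i => hω i]
  · filter_upwards [eventually_gt_atTop 0] with m hm
    simp [hm.ne']

theorem isControlledSelection_guardedFilter {c x θ₁ θ₂ b : ℝ} (hα : 0 < α) (hc : 0 ≤ c)
    (hx₀ : 0 ≤ x) (hx₁ : x < 1) (hθ₂ : 0 < θ₂) (hb : 0 ≤ b)
    (hkey : c * (1 - θ₁) ≤ b * θ₂ * (1 - x))
    (h₁ : ∀ᵐ ω ∂ℙ, ∀ᶠ m : ℕ in atTop, θ₁ * m ≤ #(univ.filter fun i : Fin m => p i ω ≤ x * α))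
    (h₂ : ∀ᵐ ω ∂ℙ, ∀ᶠ m : ℕ in atTop, θ₂ * m ≤ #(univ.filter fun i : Fin m => p i ω ≤ c * α)) :
    IsControlledSelection p α b θ₂
      fun m ω => guardedFilter (x * α) (c * α) θ₁ θ₂ fun i : Fin m => p i ω := by
  refine ⟨hθ₂, fun m => (measurable_guardedFilter m _ _ _ _).comp (comap_measurable _),
    .of_forall fun ω m => ?_, tendsto_measure_of_ae_eventually_mem ?_⟩
  · dsimp only [guardedFilter]
    split_ifs with h
    · exact qval_filter_le hα hc hx₀ hx₁ hb hkey h.1 h.2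
    · simpa [qval] using hb
  · filter_upwards [h₁, h₂] with ω h₁ h₂
    filter_upwards [h₁, h₂, eventually_gt_atTop 0] with m h₁ h₂ hm
    rw [guardedFilter, if_pos ⟨h₁, h₂⟩, le_div_iff₀ (Nat.cast_pos.2 hm)]
    exact h₂

end Selection

theorem stmt18_general {Ω : Type*} [MeasureSpace Ω] [IsProbabilityMeasure (ℙ : Measure Ω)]
    (p : ℕ → Ω → ℝ) (hpmeas : ∀ i, Measurable (p i))
    (hprange : ∀ i ω, p i ω ∈ Set.Icc (0 : ℝ) 1)
    (hindep : iIndepFun p ℙ)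
    (γ : ℝ) (hγ : 0 ≤ γ ∧ γ ≤ 1)
    (P1 : ℝ → ℝ) (hP1mono : MonotoneOn P1 (Set.Icc 0 1))
    (hcdf : ∀ i, ∀ x ∈ Set.Icc (0 : ℝ) 1,
      ℙ {ω | p i ω ≤ x} = ENNReal.ofReal (γ * x + (1 - γ) * P1 x))
    (α : ℝ) (hα : 0 < α ∧ α ≤ 1)
    (q : ℝ) (hq : 0 ≤ q ∧ q ≤ 1)
    (hdetect : piBar (fun x => γ * x + (1 - γ) * P1 x) (q * α) < 1) :
    ∃ (J : (m : ℕ) → Ω → Finset (Fin m)) (y : ℝ), 0 < y ∧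
      (∀ m : ℕ, @Measurable Ω (Finset (Fin m))
        (MeasurableSpace.comap (fun ω => fun i : Fin m => p i.val ω) inferInstance) ⊤
        (J m)) ∧
      (∀ᵐ ω ∂ℙ, ∀ m : ℕ,
        qval α (fun i : Fin m => p i.val ω) (J m ω) ≤
          piBar (fun x => γ * x + (1 - γ) * P1 x) α * q) ∧
      Tendsto (fun m : ℕ => ℙ {ω | y ≤ ((J m ω).card : ℝ) / m}) atTop (nhds 1) := by
  set P : ℝ → ℝ := fun x => γ * x + (1 - γ) * P1 x
  have hPmono : MonotoneOn P (Set.Icc 0 1) := fun a ha b hb hab =>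
    add_le_add (mul_le_mul_of_nonneg_left hab hγ.1)
      (mul_le_mul_of_nonneg_left (hP1mono ha hb hab) (sub_nonneg.2 hγ.2))
  suffices ∃ J y, IsControlledSelection p α (piBar P α * q) y J from this.imp fun _ => id
  rcases lt_or_ge (P α) 1 with hPα | hPα
  · obtain ⟨c, x, θ₁, θ₂, hc₀, hc₁, hx₀, hx₁, hθ₂, hθ₁P, hθ₂P, hkey⟩ :=
      exists_thresholds hα.1 hα.2 hPmono hPα hq.1 hq.2 hdetect
    have hfreq : ∀ s ∈ Set.Icc (0 : ℝ) 1, ∀ θ < P (s * α), ∀ᵐ ω ∂ℙ, ∀ᶠ m : ℕ in atTop,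
        θ * m ≤ #(univ.filter fun i : Fin m => p i ω ≤ s * α) := fun s hs θ hθ =>
      ae_eventually_mul_le_card_filter hpmeas hprange hindep hcdf
        ⟨mul_nonneg hs.1 hα.1.le, mul_le_one₀ hs.2 hα.1.le hα.2⟩ hθ
    exact ⟨_, _, isControlledSelection_guardedFilter hα.1 hc₀ hx₀ hx₁ hθ₂
      (mul_nonneg (piBar_pos hα.1 hα.2 hPmono hPα).le hq.1) hkey
      (hfreq x ⟨hx₀, hx₁.le⟩ θ₁ hθ₁P) (hfreq c ⟨hc₀, hc₁⟩ θ₂ hθ₂P)⟩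
  · have hp : ∀ᵐ ω ∂ℙ, ∀ i, p i ω ≤ α := ae_all_iff.2 fun i => by
      refine (prob_compl_eq_zero_iff (measurableSet_le (hpmeas i) measurable_const)).2 ?_
      refine le_antisymm prob_le_one ?_
      rw [hcdf i α ⟨hα.1.le, hα.2⟩, ← ENNReal.ofReal_one]
      exact ENNReal.ofReal_le_ofReal hPα
    rw [piBar, if_neg hPα.not_gt, zero_mul]
    exact ⟨_, _, isControlledSelection_univ hα.1 hp⟩

theorem stmt18 {Ω : Type*} [MeasureSpace Ω] [IsProbabilityMeasure (ℙ : Measure Ω)]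
    (p : ℕ → Ω → ℝ) (hpmeas : ∀ i, Measurable (p i))
    (hprange : ∀ i ω, p i ω ∈ Set.Icc (0 : ℝ) 1)
    (hindep : iIndepFun p ℙ)
    (γ : ℝ) (hγ : 0 ≤ γ ∧ γ ≤ 1)
    (P1 : ℝ → ℝ) (hP1mono : MonotoneOn P1 (Set.Icc 0 1))
    (hP1bounds : ∀ x ∈ Set.Icc (0 : ℝ) 1, x ≤ P1 x ∧ P1 x ≤ 1) (hP1one : P1 1 = 1)
    (hcdf : ∀ i, ∀ x ∈ Set.Icc (0 : ℝ) 1,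
      ℙ {ω | p i ω ≤ x} = ENNReal.ofReal (γ * x + (1 - γ) * P1 x))
    (α : ℝ) (hα : 0 < α ∧ α ≤ 1)
    (q : ℝ) (hq : 0 ≤ q ∧ q ≤ 1)
    (hdetect : piBar (fun x => γ * x + (1 - γ) * P1 x) (q * α) < 1) :
    ∃ (J : (m : ℕ) → Ω → Finset (Fin m)) (y : ℝ), 0 < y ∧
      (∀ m : ℕ, @Measurable Ω (Finset (Fin m))
        (MeasurableSpace.comap (fun ω => fun i : Fin m => p i.val ω) inferInstance) ⊤
        (J m)) ∧
      (∀ᵐ ω ∂ℙ, ∀ m : ℕ,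
        qval α (fun i : Fin m => p i.val ω) (J m ω) ≤
          piBar (fun x => γ * x + (1 - γ) * P1 x) α * q) ∧
      Tendsto (fun m : ℕ => ℙ {ω | y ≤ ((J m ω).card : ℝ) / m}) atTop (nhds 1) :=
  stmt18_general p hpmeas hprange hindep γ hγ P1 hP1mono hcdf α hα q hq hdetect
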